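/- Let 𝔾 be a Carnot group, Ω ⊆ 𝔾 a domain, and H : Ω × ℝ^m → ℝ satisfy (H). For every K ∈ 𝒦(H,Ω), every x₀ ∈ Ω, and every R > 0 with B_R(x₀, d_Ω) ⊆ Ω, there exist r > 0 and ε̄ > 0 such that for every x ∈ B_r(x₀, d_Ω) and every 0 < ε < ε̄, any sub-unit curve γ : [0,T] → ℝ^n with γ(0) = x₀, γ(T) = x and d_{σ*_K}(x₀, x) ≥ ∫₀^T σ*_K(γ(t), γ'(t)) dt − ε lies entirely in B_R(x₀, d_Ω). -/

import Mathlib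

open Filter Topology MeasureTheory Set
open scoped RealInnerProductSpace

noncomputable section

/-- Abbreviation for Euclidean space `ℝ^n`. -/
abbrev Euc (n : ℕ) := EuclideanSpace ℝ (Fin n)

/-- A (coordinatized) Carnot group of topological dimension `n`, rank `m` and step `k`,
identified with `ℝ^n` via exponential coordinates. -/
structure CarnotGroup (n m k : ℕ) where
  pos_m : 0 < m
  m_le_n : m ≤ n
  pos_k : 0 < k
  /-- the group law (in exponential coordinates) -/
  mul : Euc n → Euc n → Euc n
  mul_assoc' : ∀ x y z, mul (mul x y) z = mul x (mul y z)
  zero_mul' : ∀ x, mul 0 x = x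
  mul_zero' : ∀ x, mul x 0 = x
  /-- in exponential coordinates the group inverse is `-x` -/
  neg_mul_cancel : ∀ x, mul (-x) x = 0
  smooth_mul : ContDiff ℝ (⊤ : ℕ∞) (fun q : Euc n × Euc n => mul q.1 q.2)
  /-- the layer (weight) of each coordinate in the stratification -/
  w : Fin n → ℕ
  w_first_layer : ∀ j : Fin n, (j : ℕ) < m ↔ w j = 1
  w_bounds : ∀ j : Fin n, 1 ≤ w j ∧ w j ≤ k
  /-- intrinsic dilations `δ_λ` -/
  dil : ℝ → Euc n → Euc n
  dil_apply : ∀ (lam : ℝ) (y : Euc n) (j : Fin n), dil lam y j = lam ^ w j * y j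
  dil_mul : ∀ (lam : ℝ) (x y : Euc n), dil lam (mul x y) = mul (dil lam x) (dil lam y)
  /-- the generating horizontal vector fields `X₁, …, X_m` -/
  X : Fin m → Euc n → Euc n
  smooth_X : ∀ i, ContDiff ℝ (⊤ : ℕ∞) (X i)
  X_zero : ∀ i, X i 0 = EuclideanSpace.single (Fin.castLE m_le_n i) 1
  X_left_invariant : ∀ (g x : Euc n) (i : Fin m),
    X i (mul g x) = fderiv ℝ (mul g) x (X i x)
  /-- Chow–Rashevskii connectivity: any two points of an open connected set are joined
  by a sub-unit horizontal curve inside the set. -/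
  chow : ∀ S : Set (Euc n), IsOpen S → IsPreconnected S → ∀ x ∈ S, ∀ y ∈ S,
    ∃ (T : ℝ) (γ : ℝ → Euc n) (a : ℝ → Euc m),
      0 < T ∧ (∀ t ∈ Icc (0:ℝ) T, γ t ∈ S) ∧ ContinuousOn γ (Icc 0 T) ∧
      AEStronglyMeasurable a (volume.restrict (Icc (0:ℝ) T)) ∧
      (∀ᵐ t ∂(volume.restrict (Icc (0:ℝ) T)), ‖a t‖ ≤ 1) ∧
      (∀ t ∈ Icc (0:ℝ) T, γ t = γ 0 + ∫ s in (0:ℝ)..t, ∑ i, a s i • X i (γ s)) ∧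
      γ 0 = x ∧ γ T = y

/-- The sublevel set `Z(x) = {p : H(x,p) ≤ 0}` of a Hamiltonian. -/
def Zset {n m : ℕ} (H : Euc n → Euc m → ℝ) (x : Euc n) : Set (Euc m) := {p | H x p ≤ 0}

/-- The structural assumptions (H) for a Hamiltonian on `S × ℝ^m`, with constant `α`. -/
structure SatisfiesH {n m : ℕ} (S : Set (Euc n)) (H : Euc n → Euc m → ℝ) (α : ℝ) : Prop where
  one_lt_alpha : 1 < α
  /-- (H1) Borel measurability of `H` on `S × ℝ^m` -/
  borel : Measurable ((S ×ˢ (univ : Set (Euc m))).restrict (fun q : Euc n × Euc m => H q.1 q.2))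
  /-- (H2) -/
  closed : ∀ x ∈ S, IsClosed (Zset H x)
  convex : ∀ x ∈ S, Convex ℝ (Zset H x)
  frontier_eq : ∀ x ∈ S, frontier (Zset H x) = {p | H x p = 0}
  /-- (H3) -/
  ball_sub : ∀ x ∈ S, Metric.ball (0 : Euc m) (1/α) ⊆ Zset H x
  sub_ball : ∀ x ∈ S, Zset H x ⊆ Metric.ball (0 : Euc m) α

/-- The support-function norm `σ*(x,p) = sup{⟨-ξ,p⟩ : ξ ∈ Z(x)}`. -/
def sigmaStar {n m : ℕ} (H : Euc n → Euc m → ℝ) (x : Euc n) (p : Euc m) : ℝ :=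
  sSup ((fun ξ : Euc m => ⟪-ξ, p⟫) '' Zset H x)

/-- `K ∈ 𝒦(H,Ω)`: a Hamiltonian on all of `ℝ^n × ℝ^m` satisfying (H) and agreeing
with `H` on `Ω × ℝ^m`. -/
def ExtendsH {n m : ℕ} (Ω : Set (Euc n)) (H K : Euc n → Euc m → ℝ) : Prop :=
  (∃ α : ℝ, SatisfiesH (univ : Set (Euc n)) K α) ∧ ∀ x ∈ Ω, ∀ p, K x p = H x p

/-- The length of a curve `γ : [0,T] → ℝ^n` with respect to a (possibly non-symmetric)
distance `d`, as a supremum over partitions. -/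
def lengthVia {n : ℕ} (d : Euc n → Euc n → ℝ) (γ : ℝ → Euc n) (T : ℝ) : ℝ :=
  sSup {L | ∃ (s : ℕ) (t : Fin (s + 1) → ℝ), Monotone t ∧ t 0 = 0 ∧ t (Fin.last s) = T ∧
    L = ∑ j : Fin s, d (γ (t j.castSucc)) (γ (t j.succ))}

namespace CarnotGroup

variable {n m k : ℕ} (G : CarnotGroup n m k)

/-- `γ : [0,T] → S` is a horizontal curve with control `a` (the coordinates of its tangent
vector with respect to `X₁,…,X_m`). -/
def IsHorizIn (S : Set (Euc n)) (T : ℝ) (γ : ℝ → Euc n) (a : ℝ → Euc m) : Prop :=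
  0 < T ∧ (∀ t ∈ Icc (0:ℝ) T, γ t ∈ S) ∧ ContinuousOn γ (Icc 0 T) ∧
  AEStronglyMeasurable a (volume.restrict (Icc (0:ℝ) T)) ∧
  (∃ C : ℝ, ∀ᵐ t ∂(volume.restrict (Icc (0:ℝ) T)), ‖a t‖ ≤ C) ∧
  (∀ t ∈ Icc (0:ℝ) T, γ t = γ 0 + ∫ s in (0:ℝ)..t, ∑ i, a s i • G.X i (γ s))

/-- Sub-unit horizontal curve: `‖a(t)‖ ≤ 1` a.e. -/
def IsSubunitIn (S : Set (Euc n)) (T : ℝ) (γ : ℝ → Euc n) (a : ℝ → Euc m) : Prop :=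
  G.IsHorizIn S T γ a ∧ ∀ᵐ t ∂(volume.restrict (Icc (0:ℝ) T)), ‖a t‖ ≤ 1

/-- The Carnot–Carathéodory distance associated to the set `S` (for `S = univ` this is
the global distance `d_𝔾`). -/
def ccDist (S : Set (Euc n)) (x y : Euc n) : ℝ :=
  sInf {L | ∃ T γ a, G.IsSubunitIn S T γ a ∧ γ 0 = x ∧ γ T = y ∧
    L = ∫ t in (0:ℝ)..T, ‖a t‖}

/-- The optical length function `d_{σ*}` associated to a Hamiltonian `H`, with curves in `S`. -/
def optDist (S : Set (Euc n)) (H : Euc n → Euc m → ℝ) (x y : Euc n) : ℝ :=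
  sInf {L | ∃ T γ a, G.IsHorizIn S T γ a ∧ γ 0 = x ∧ γ T = y ∧
    L = ∫ t in (0:ℝ)..T, sigmaStar H (γ t) (a t)}

/-- Monge subsolution property relative to a given optical length function `d`. -/
def MongeSubVia (Ω : Set (Euc n)) (d : Euc n → Euc n → ℝ) (u : Euc n → ℝ) : Prop :=
  ∀ x₀ ∈ Ω, 0 ≤ liminf (fun x => (u x - u x₀ + d x₀ x) / G.ccDist Ω x₀ x) (𝓝[Ω \ {x₀}] x₀)

/-- Monge supersolution property relative to a given optical length function `d`. -/
def MongeSupVia (Ω : Set (Euc n)) (d : Euc n → Euc n → ℝ) (u : Euc n → ℝ) : Prop :=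
  ∀ x₀ ∈ Ω, liminf (fun x => (u x - u x₀ + d x₀ x) / G.ccDist Ω x₀ x) (𝓝[Ω \ {x₀}] x₀) ≤ 0

/-- Monge solution property relative to a given optical length function `d`. -/
def MongeSolVia (Ω : Set (Euc n)) (d : Euc n → Euc n → ℝ) (u : Euc n → ℝ) : Prop :=
  ∀ x₀ ∈ Ω, liminf (fun x => (u x - u x₀ + d x₀ x) / G.ccDist Ω x₀ x) (𝓝[Ω \ {x₀}] x₀) = 0

/-- `u` is a Monge subsolution to `H(x, Xu) = 0` in `Ω`. -/
def MongeSub (Ω : Set (Euc n)) (H : Euc n → Euc m → ℝ) (u : Euc n → ℝ) : Prop :=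
  G.MongeSubVia Ω (G.optDist Ω H) u

/-- `u` is a Monge supersolution to `H(x, Xu) = 0` in `Ω`. -/
def MongeSup (Ω : Set (Euc n)) (H : Euc n → Euc m → ℝ) (u : Euc n → ℝ) : Prop :=
  G.MongeSupVia Ω (G.optDist Ω H) u

/-- `u` is a Monge solution to `H(x, Xu) = 0` in `Ω`. -/
def MongeSol (Ω : Set (Euc n)) (H : Euc n → Euc m → ℝ) (u : Euc n → ℝ) : Prop :=
  G.MongeSolVia Ω (G.optDist Ω H) u

/-- `ψ ∈ C¹_X(Ω)` with horizontal gradient `Xψ`: both are continuous on `Ω` and `Xψ` is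
the derivative of `ψ` along the horizontal directions. -/
def IsC1X (Ω : Set (Euc n)) (ψ : Euc n → ℝ) (Xψ : Euc n → Euc m) : Prop :=
  ContinuousOn ψ Ω ∧ ContinuousOn Xψ Ω ∧
  ∀ x ∈ Ω, ∀ i : Fin m, HasDerivAt (fun t : ℝ => ψ (x + t • G.X i x)) (Xψ x i) 0

/-- `u` is a viscosity subsolution to `H(x, Xu) = 0` in `Ω`. -/
def ViscSub (Ω : Set (Euc n)) (H : Euc n → Euc m → ℝ) (u : Euc n → ℝ) : Prop :=
  ∀ x₀ ∈ Ω, ∀ ψ Xψ, G.IsC1X Ω ψ Xψ →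
    IsLocalMaxOn (fun x => u x - ψ x) Ω x₀ → H x₀ (Xψ x₀) ≤ 0

/-- `u` is a viscosity supersolution to `H(x, Xu) = 0` in `Ω`. -/
def ViscSup (Ω : Set (Euc n)) (H : Euc n → Euc m → ℝ) (u : Euc n → ℝ) : Prop :=
  ∀ x₀ ∈ Ω, ∀ ψ Xψ, G.IsC1X Ω ψ Xψ →
    IsLocalMinOn (fun x => u x - ψ x) Ω x₀ → 0 ≤ H x₀ (Xψ x₀)

/-- Projection on the first-layer coordinates, `π(y) = (y₁,…,y_m)`. -/
def pi1 (y : Euc n) : Euc m := WithLp.toLp 2 (fun i => y (Fin.castLE G.m_le_n i))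

/-- The first order superjet `∂⁺_X u(x₀)`. -/
def superjet (Ω : Set (Euc n)) (u : Euc n → ℝ) (x₀ : Euc n) : Set (Euc m) :=
  {v | limsup (fun x => (u x - u x₀ - ⟪v, G.pi1 (G.mul (-x₀) x)⟫) / G.ccDist Ω x₀ x)
      (𝓝[Ω \ {x₀}] x₀) ≤ 0}

/-- The first order subjet `∂⁻_X u(x₀)`. -/
def subjet (Ω : Set (Euc n)) (u : Euc n → ℝ) (x₀ : Euc n) : Set (Euc m) :=
  {v | 0 ≤ liminf (fun x => (u x - u x₀ - ⟪v, G.pi1 (G.mul (-x₀) x)⟫) / G.ccDist Ω x₀ x)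
      (𝓝[Ω \ {x₀}] x₀)}

/-- `u` is a jet subsolution to `H(x, Xu) = 0` in `Ω`. -/
def JetSub (Ω : Set (Euc n)) (H : Euc n → Euc m → ℝ) (u : Euc n → ℝ) : Prop :=
  ∀ x₀ ∈ Ω, ∀ v ∈ G.superjet Ω u x₀, H x₀ v ≤ 0

/-- `u` is a jet supersolution to `H(x, Xu) = 0` in `Ω`. -/
def JetSup (Ω : Set (Euc n)) (H : Euc n → Euc m → ℝ) (u : Euc n → ℝ) : Prop :=
  ∀ x₀ ∈ Ω, ∀ v ∈ G.subjet Ω u x₀, 0 ≤ H x₀ v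

/-- `u ∈ W^{1,∞}_{X,loc}(Ω)`, i.e. `u` is locally Lipschitz with respect to the
Carnot–Carathéodory distance `d_Ω`. -/
def LocLipCC (Ω : Set (Euc n)) (u : Euc n → ℝ) : Prop :=
  ∀ x ∈ Ω, ∃ ε > (0:ℝ), ∃ C : ℝ, ∀ y ∈ Ω, ∀ z ∈ Ω,
    G.ccDist Ω x y < ε → G.ccDist Ω x z < ε → |u y - u z| ≤ C * G.ccDist Ω y z

/-- The homogeneous (Korányi-type) norm `‖y‖ = (Σ_j |y^{(j)}|^{2k!/j})^{1/(2k!)}`. -/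
def koranyiNorm (y : Euc n) : ℝ :=
  (∑ j ∈ Finset.Icc 1 k,
      (Real.sqrt (∑ i ∈ Finset.univ.filter (fun i : Fin n => G.w i = j), (y i) ^ 2)) ^
        ((2 * (Nat.factorial k) : ℝ) / j)) ^ ((1 : ℝ) / (2 * Nat.factorial k))

/-- The Korányi gauge distance `𝔡(x,y) = ‖x⁻¹ · y‖`. -/
def koranyiDist (x y : Euc n) : ℝ := G.koranyiNorm (G.mul (-x) y)

end CarnotGroup
section SigmaStarAux

variable {n m : ℕ} {K : Euc n → Euc m → ℝ} {α : ℝ}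

lemma SatisfiesH.alpha_pos (h : SatisfiesH (univ : Set (Euc n)) K α) : 0 < α :=
  lt_trans one_pos h.one_lt_alpha

lemma zero_mem_Zset (h : SatisfiesH (univ : Set (Euc n)) K α) (x : Euc n) :
    (0 : Euc m) ∈ Zset K x := by
  have hα := h.alpha_pos
  exact h.ball_sub x (mem_univ x) (Metric.mem_ball_self (by positivity))

lemma inner_le_of_mem_Zset (h : SatisfiesH (univ : Set (Euc n)) K α) (x : Euc n) (p : Euc m)
    {ξ : Euc m} (hξ : ξ ∈ Zset K x) : ⟪-ξ, p⟫ ≤ α * ‖p‖ := by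
  have h1 : ‖ξ‖ < α := by
    have := h.sub_ball x (mem_univ x) hξ
    simpa [Metric.mem_ball] using this
  calc ⟪-ξ, p⟫ ≤ ‖(-ξ)‖ * ‖p‖ := real_inner_le_norm _ _
    _ = ‖ξ‖ * ‖p‖ := by rw [norm_neg]
    _ ≤ α * ‖p‖ := by nlinarith [norm_nonneg p, norm_nonneg ξ]

lemma bddAbove_Zimage (h : SatisfiesH (univ : Set (Euc n)) K α) (x : Euc n) (p : Euc m) :
    BddAbove ((fun ξ : Euc m => ⟪-ξ, p⟫) '' Zset K x) := by
  refine ⟨α * ‖p‖, ?_⟩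
  rintro v ⟨ξ, hξ, rfl⟩
  exact inner_le_of_mem_Zset h x p hξ

lemma sigmaStar_nonneg (h : SatisfiesH (univ : Set (Euc n)) K α) (x : Euc n) (p : Euc m) :
    0 ≤ sigmaStar K x p := by
  have h0 : (fun ξ : Euc m => ⟪-ξ, p⟫) 0 ∈ (fun ξ : Euc m => ⟪-ξ, p⟫) '' Zset K x :=
    mem_image_of_mem _ (zero_mem_Zset h x)
  have h1 := le_csSup (bddAbove_Zimage h x p) h0
  have h2 : (fun ξ : Euc m => ⟪-ξ, p⟫) 0 = 0 := by simp
  rw [h2] at h1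
  exact h1

lemma sigmaStar_le (h : SatisfiesH (univ : Set (Euc n)) K α) (x : Euc n) (p : Euc m) :
    sigmaStar K x p ≤ α * ‖p‖ := by
  refine Real.sSup_le ?_ (mul_nonneg h.alpha_pos.le (norm_nonneg p))
  rintro v ⟨ξ, hξ, rfl⟩
  exact inner_le_of_mem_Zset h x p hξ

lemma le_sigmaStar (h : SatisfiesH (univ : Set (Euc n)) K α) (x : Euc n) (p : Euc m) :
    (1 / α) * ‖p‖ ≤ sigmaStar K x p := by
  rcases eq_or_ne p 0 with rfl | hp
  · simpa using sigmaStar_nonneg h x 0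
  have hpn : 0 < ‖p‖ := norm_pos_iff.2 hp
  have hα : 0 < α := h.alpha_pos
  have key : ∀ θ : ℝ, 0 < θ → θ < 1 → θ * (‖p‖ / α) ≤ sigmaStar K x p := by
    intro θ hθ0 hθ1
    set ξ : Euc m := (-(θ / (α * ‖p‖))) • p with hξdef
    have hnξ : ‖ξ‖ = θ / α := by
      rw [hξdef, norm_smul, Real.norm_eq_abs, abs_neg, abs_of_nonneg (by positivity)]
      field_simp
    have hmem : ξ ∈ Zset K x := by
      apply h.ball_sub x (mem_univ x)
      rw [Metric.mem_ball, dist_zero_right, hnξ]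
      gcongr
    have hval : ⟪-ξ, p⟫ = θ * (‖p‖ / α) := by
      rw [hξdef, ← neg_smul, neg_neg, real_inner_smul_left, real_inner_self_eq_norm_mul_norm]
      field_simp
    have h2 := le_csSup (bddAbove_Zimage h x p) (mem_image_of_mem (fun ξ : Euc m => ⟪-ξ, p⟫) hmem)
    rw [hval] at h2
    exact h2
  have hq : 0 < ‖p‖ / α := by positivity
  have hgoal : ‖p‖ / α ≤ sigmaStar K x p := by
    refine le_of_forall_lt fun c hc => ?_
    rcases lt_or_ge c 0 with hc0 | hc0
    · exact lt_of_lt_of_le hc0 (sigmaStar_nonneg h x p)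
    · set q := ‖p‖ / α
      have hcq : c / q < 1 := (div_lt_one hq).2 hc
      set θ := (c / q + 1) / 2 with hθdef
      have hθ0 : 0 < θ := by positivity
      have hθ1 : θ < 1 := by rw [hθdef]; linarith
      have hmul : θ * q = (c + q) / 2 := by
        rw [hθdef]
        field_simp
      have : c < θ * q := by rw [hmul]; linarith
      exact lt_of_lt_of_le this (key θ hθ0 hθ1)
  calc (1 / α) * ‖p‖ = ‖p‖ / α := by ring
    _ ≤ _ := hgoal

end SigmaStarAux
section SigmaStarRep
set_option maxHeartbeats 1000000

variable {n m : ℕ} {K : Euc n → Euc m → ℝ} {α : ℝ}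

lemma interior_Zset (h : SatisfiesH (univ : Set (Euc n)) K α) (x : Euc n) :
    interior (Zset K x) = {p | K x p < 0} := by
  have hcl : IsClosed (Zset K x) := h.closed x (mem_univ x)
  have hfr : frontier (Zset K x) = {p | K x p = 0} := h.frontier_eq x (mem_univ x)
  have hfr' : frontier (Zset K x) = Zset K x \ interior (Zset K x) := hcl.frontier_eq
  ext p
  constructor
  · intro hpint
    have hpZ : p ∈ Zset K x := interior_subset hpint
    have : p ∉ frontier (Zset K x) := by
      rw [hfr']
      exact fun hc => hc.2 hpint
    rw [hfr] at this
    exact lt_of_le_of_ne hpZ this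
  · intro hlt
    by_contra hnot
    have : p ∈ frontier (Zset K x) := by
      rw [hfr']
      refine ⟨?_, hnot⟩
      show K x p ≤ 0
      exact le_of_lt hlt
    rw [hfr] at this
    exact absurd this (ne_of_lt hlt)

lemma zero_mem_interior_Zset (h : SatisfiesH (univ : Set (Euc n)) K α) (x : Euc n) :
    (0 : Euc m) ∈ interior (Zset K x) := by
  have hα := h.alpha_pos
  have : Metric.ball (0 : Euc m) (1/α) ⊆ interior (Zset K x) :=
    interior_maximal (h.ball_sub x (mem_univ x)) Metric.isOpen_ball
  exact this (Metric.mem_ball_self (by positivity))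

lemma sigmaStar_eq_iSup (h : SatisfiesH (univ : Set (Euc n)) K α)
    {D : ℕ → Euc m} (hD : DenseRange D) (x : Euc n) (p : Euc m) :
    sigmaStar K x p = ⨆ j : ℕ, if K x (D j) < 0 then ⟪-(D j), p⟫ else 0 := by
  set F : ℕ → ℝ := fun j => if K x (D j) < 0 then ⟪-(D j), p⟫ else 0 with hF
  have hbddF : BddAbove (range F) := by
    refine ⟨α * ‖p‖, ?_⟩
    rintro v ⟨j, rfl⟩
    simp only [hF]
    split_ifs with hj
    · exact inner_le_of_mem_Zset h x p (le_of_lt hj)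
    · exact mul_nonneg h.alpha_pos.le (norm_nonneg p)
  -- every value over Z is dominated by the countable sup
  have claim : ∀ ξ ∈ Zset K x, ⟪-ξ, p⟫ ≤ ⨆ j, F j := by
    intro ξ hξ
    refine le_of_forall_lt fun c hc => ?_
    -- find b ∈ (0,1) with c < b * ⟪-ξ,p⟫
    obtain ⟨b, hb0, hb1, hbc⟩ : ∃ b : ℝ, 0 < b ∧ b < 1 ∧ c < b * ⟪-ξ, p⟫ := by
      set v : ℝ := ⟪-ξ, p⟫
      rcases le_or_gt v 0 with hv | hv
      · exact ⟨1/2, by norm_num, by norm_num, by nlinarith⟩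
      · set c' : ℝ := max c 0
        have hc' : c' < v := max_lt hc hv
        have hc'0 : 0 ≤ c' := le_max_right _ _
        refine ⟨(c' / v + 1) / 2, by positivity, ?_, ?_⟩
        · have : c' / v < 1 := (div_lt_one hv).2 hc'
          linarith
        · have hmul : (c' / v + 1) / 2 * v = (c' + v) / 2 := by field_simp
          have : c' < (c' + v) / 2 := by linarith
          rw [hmul]
          exact lt_of_le_of_lt (le_max_left c 0) this
    -- b • ξ lies in the interior of Z
    have hζ : b • ξ ∈ interior (Zset K x) := by
      have := (h.convex x (mem_univ x)).combo_interior_closure_mem_interior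
        (zero_mem_interior_Zset h x) (subset_closure hξ)
        (a := 1 - b) (b := b) (by linarith) hb0.le (by ring)
      simpa using this
    -- an open set on which the linear functional stays above c
    set U : Set (Euc m) := interior (Zset K x) ∩ (fun q : Euc m => ⟪-q, p⟫) ⁻¹' Ioi c with hU
    have hUopen : IsOpen U := by
      apply isOpen_interior.inter
      exact (isOpen_Ioi.preimage ((continuous_id.neg).inner continuous_const))
    have hζU : b • ξ ∈ U := by
      have hinner : ⟪-(b • ξ), p⟫ = b * ⟪-ξ, p⟫ := by
        rw [← smul_neg, real_inner_smul_left]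
      refine ⟨hζ, ?_⟩
      simp only [mem_preimage, mem_Ioi, hinner]
      exact hbc
    obtain ⟨j, hj⟩ := hD.exists_mem_open hUopen ⟨_, hζU⟩
    have hjZ : K x (D j) < 0 := by
      have := hj.1
      rw [interior_Zset h] at this
      exact this
    have hFj : c < F j := by
      have := hj.2
      simp only [hF, if_pos hjZ]
      exact this
    exact lt_of_lt_of_le hFj (le_ciSup hbddF j)
  have hiSup0 : (0 : ℝ) ≤ ⨆ j, F j := by
    have := claim 0 (zero_mem_Zset h x)
    simpa using this
  apply le_antisymm
  · refine Real.sSup_le ?_ hiSup0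
    rintro v ⟨ξ, hξ, rfl⟩
    exact claim ξ hξ
  · refine Real.iSup_le (fun j => ?_) (sigmaStar_nonneg h x p)
    show (if K x (D j) < 0 then ⟪-(D j), p⟫ else 0) ≤ _
    split_ifs with hj
    · exact le_csSup (bddAbove_Zimage h x p)
        (mem_image_of_mem (fun ξ : Euc m => ⟪-ξ, p⟫) (show K x (D j) ≤ 0 from le_of_lt hj))
    · exact sigmaStar_nonneg h x p

lemma measurable_uncurry_K (h : SatisfiesH (univ : Set (Euc n)) K α) :
    Measurable fun q : Euc n × Euc m => K q.1 q.2 := by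
  have hme : Measurable fun q : Euc n × Euc m =>
      (⟨q, by simp⟩ : ((univ : Set (Euc n)) ×ˢ (univ : Set (Euc m)) : Set (Euc n × Euc m))) :=
    measurable_id.subtype_mk
  exact h.borel.comp hme

end SigmaStarRep
section CurveAux
set_option maxHeartbeats 1000000

variable {n m : ℕ}

lemma abs_coord_le_norm (v : Euc m) (i : Fin m) : |v i| ≤ ‖v‖ := by
  rw [EuclideanSpace.norm_eq]
  have h1 : |v i| ^ 2 ≤ ∑ j, ‖v j‖ ^ 2 := by
    have := Finset.single_le_sum (f := fun j => ‖v j‖ ^ 2)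
      (fun j _ => by positivity) (Finset.mem_univ i)
    simpa [Real.norm_eq_abs] using this
  calc |v i| = Real.sqrt (|v i| ^ 2) := by rw [Real.sqrt_sq_eq_abs, abs_abs]
    _ ≤ _ := Real.sqrt_le_sqrt h1

lemma intervalIntegrable_of_bounded {T C : ℝ} (hT : 0 < T) {f : ℝ → ℝ}
    (hm : AEStronglyMeasurable f (volume.restrict (Icc (0:ℝ) T)))
    (hC : ∀ᵐ t ∂(volume.restrict (Icc (0:ℝ) T)), ‖f t‖ ≤ C) :
    IntervalIntegrable f volume 0 T := by
  rw [intervalIntegrable_iff_integrableOn_Ioc_of_le hT.le]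
  have hle : volume.restrict (Ioc (0:ℝ) T) ≤ volume.restrict (Icc (0:ℝ) T) :=
    Measure.restrict_mono Ioc_subset_Icc_self le_rfl
  refine Integrable.mono' (g := fun _ => C)
    (integrableOn_const measure_Ioc_lt_top.ne) (hm.mono_measure hle) ?_
  exact hC.filter_mono (ae_mono hle)

lemma aesm_norm_a {T : ℝ} {a : ℝ → Euc m}
    (ha : AEStronglyMeasurable a (volume.restrict (Icc (0:ℝ) T))) :
    AEStronglyMeasurable (fun t => ‖a t‖) (volume.restrict (Icc (0:ℝ) T)) := ha.norm

lemma aesm_sum_smul {k : ℕ} (G : CarnotGroup n m k) {T : ℝ} {γ : ℝ → Euc n} {a : ℝ → Euc m}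
    (hγ : ContinuousOn γ (Icc (0:ℝ) T))
    (ha : AEStronglyMeasurable a (volume.restrict (Icc (0:ℝ) T))) :
    AEStronglyMeasurable (fun s => ∑ i, a s i • G.X i (γ s))
      (volume.restrict (Icc (0:ℝ) T)) := by
  have hγm : AEStronglyMeasurable γ (volume.restrict (Icc (0:ℝ) T)) :=
    hγ.aestronglyMeasurable measurableSet_Icc
  apply Finset.aestronglyMeasurable_fun_sum
  intro i _
  have h1 : AEStronglyMeasurable (fun s => a s i) (volume.restrict (Icc (0:ℝ) T)) :=
    ((EuclideanSpace.proj i).continuous.comp_aestronglyMeasurable ha)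
  have h2 : AEStronglyMeasurable (fun s => G.X i (γ s)) (volume.restrict (Icc (0:ℝ) T)) :=
    (G.smooth_X i).continuous.comp_aestronglyMeasurable hγm
  exact h1.smul h2

lemma aesm_sigmaStar {K : Euc n → Euc m → ℝ} {α : ℝ}
    (hK : SatisfiesH (univ : Set (Euc n)) K α) {T : ℝ} {γ : ℝ → Euc n} {a : ℝ → Euc m}
    (hγ : ContinuousOn γ (Icc (0:ℝ) T))
    (ha : AEStronglyMeasurable a (volume.restrict (Icc (0:ℝ) T))) :
    AEStronglyMeasurable (fun t => sigmaStar K (γ t) (a t))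
      (volume.restrict (Icc (0:ℝ) T)) := by
  obtain ⟨D, hD⟩ := TopologicalSpace.exists_dense_seq (Euc m)
  have hγm : AEMeasurable γ (volume.restrict (Icc (0:ℝ) T)) :=
    hγ.aemeasurable measurableSet_Icc
  have ham : AEMeasurable a (volume.restrict (Icc (0:ℝ) T)) := ha.aemeasurable
  have hmeasg : Measurable fun t =>
      ⨆ j : ℕ, (if K (hγm.mk γ t) (D j) < 0 then ⟪-(D j), ham.mk a t⟫ else 0) := by
    apply Measurable.iSup
    intro j
    apply Measurable.ite
    · exact measurableSet_lt
        ((measurable_uncurry_K hK).comp ((hγm.measurable_mk).prodMk measurable_const))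
        measurable_const
    · exact Measurable.inner measurable_const ham.measurable_mk
    · exact measurable_const
  refine hmeasg.aestronglyMeasurable.congr ?_
  filter_upwards [hγm.ae_eq_mk, ham.ae_eq_mk] with t h1 h2
  rw [← h1, ← h2]
  exact (sigmaStar_eq_iSup hK hD (γ t) (a t)).symm

end CurveAux
namespace CarnotGroup
section DistAux
set_option maxHeartbeats 1000000

variable {n m k : ℕ} (G : CarnotGroup n m k)

lemma ccDist_bddBelow (S : Set (Euc n)) (x y : Euc n) :
    BddBelow {L | ∃ T γ a, G.IsSubunitIn S T γ a ∧ γ 0 = x ∧ γ T = y ∧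
      L = ∫ t in (0:ℝ)..T, ‖a t‖} := by
  refine ⟨0, ?_⟩
  rintro L ⟨T, γ, a, ⟨⟨hT, -, -, -, -, -⟩, -⟩, -, -, rfl⟩
  exact intervalIntegral.integral_nonneg hT.le fun u _ => norm_nonneg _

lemma ccDist_le_of_curve {S : Set (Euc n)} {T : ℝ} {γ : ℝ → Euc n} {a : ℝ → Euc m}
    {x y : Euc n} (h : G.IsSubunitIn S T γ a) (h0 : γ 0 = x) (hT : γ T = y) :
    G.ccDist S x y ≤ ∫ t in (0:ℝ)..T, ‖a t‖ :=
  csInf_le (G.ccDist_bddBelow S x y) ⟨T, γ, a, h, h0, hT, rfl⟩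

lemma ccDist_nonneg (S : Set (Euc n)) (x y : Euc n) : 0 ≤ G.ccDist S x y := by
  apply Real.sInf_nonneg
  rintro L ⟨T, γ, a, ⟨⟨hT, -, -, -, -, -⟩, -⟩, -, -, rfl⟩
  exact intervalIntegral.integral_nonneg hT.le fun u _ => norm_nonneg _

lemma isSubunitIn_const {S : Set (Euc n)} {x : Euc n} (hx : x ∈ S) :
    G.IsSubunitIn S 1 (fun _ => x) (fun _ => 0) := by
  refine ⟨⟨one_pos, fun t _ => hx, continuousOn_const, aestronglyMeasurable_const,
    ⟨1, Filter.Eventually.of_forall fun t => by simp⟩, fun t _ => ?_⟩,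
    Filter.Eventually.of_forall fun t => by simp⟩
  have hz : ∀ s : ℝ, ∑ i, (0 : Euc m) i • G.X i x = 0 := by
    intro s
    simp
  simp [hz]

lemma ccDist_self_nonpos {S : Set (Euc n)} {x : Euc n} (hx : x ∈ S) :
    G.ccDist S x x ≤ 0 := by
  have h := G.ccDist_le_of_curve (G.isSubunitIn_const hx) rfl rfl
  simpa using h

lemma optDist_bddBelow {K : Euc n → Euc m → ℝ} {α : ℝ}
    (hK : SatisfiesH (univ : Set (Euc n)) K α) (S : Set (Euc n)) (x y : Euc n) :
    BddBelow {L | ∃ T γ a, G.IsHorizIn S T γ a ∧ γ 0 = x ∧ γ T = y ∧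
      L = ∫ t in (0:ℝ)..T, sigmaStar K (γ t) (a t)} := by
  refine ⟨0, ?_⟩
  rintro L ⟨T, γ, a, ⟨hT, -, -, -, -, -⟩, -, -, rfl⟩
  exact intervalIntegral.integral_nonneg hT.le fun u _ => sigmaStar_nonneg hK _ _

lemma integral_sigmaStar_le {K : Euc n → Euc m → ℝ} {α : ℝ}
    (hK : SatisfiesH (univ : Set (Euc n)) K α) {T : ℝ} {γ : ℝ → Euc n} {a : ℝ → Euc m}
    (hT : 0 < T) (hcont : ContinuousOn γ (Icc (0:ℝ) T))
    (hmeas : AEStronglyMeasurable a (volume.restrict (Icc (0:ℝ) T)))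
    (hae : ∀ᵐ t ∂(volume.restrict (Icc (0:ℝ) T)), ‖a t‖ ≤ 1) :
    ∫ t in (0:ℝ)..T, sigmaStar K (γ t) (a t) ≤ α * ∫ t in (0:ℝ)..T, ‖a t‖ := by
  have hα := hK.alpha_pos
  have hIa : IntervalIntegrable (fun t => ‖a t‖) volume 0 T :=
    intervalIntegrable_of_bounded hT hmeas.norm
      (hae.mono fun t ht => by simpa [abs_of_nonneg (norm_nonneg (a t))] using ht)
  have hIg : IntervalIntegrable (fun t => sigmaStar K (γ t) (a t)) volume 0 T := by
    apply intervalIntegrable_of_bounded hT (aesm_sigmaStar hK hcont hmeas)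
    filter_upwards [hae] with t ht
    rw [Real.norm_eq_abs, abs_of_nonneg (sigmaStar_nonneg hK _ _)]
    calc sigmaStar K (γ t) (a t) ≤ α * ‖a t‖ := sigmaStar_le hK _ _
      _ ≤ α * 1 := by nlinarith
      _ = α := mul_one α
  calc ∫ t in (0:ℝ)..T, sigmaStar K (γ t) (a t)
      ≤ ∫ t in (0:ℝ)..T, α * ‖a t‖ := by
        refine intervalIntegral.integral_mono_on hT.le hIg (hIa.const_mul α)
          fun t _ => sigmaStar_le hK _ _
    _ = α * ∫ t in (0:ℝ)..T, ‖a t‖ := intervalIntegral.integral_const_mul _ _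

lemma optDist_le_alpha_ccDist {Ω : Set (Euc n)} (hΩo : IsOpen Ω) (hΩc : IsPreconnected Ω)
    {K : Euc n → Euc m → ℝ} {α : ℝ} (hK : SatisfiesH (univ : Set (Euc n)) K α)
    {x₀ x : Euc n} (hx₀ : x₀ ∈ Ω) (hx : x ∈ Ω) :
    G.optDist univ K x₀ x ≤ α * G.ccDist Ω x₀ x := by
  have hα := hK.alpha_pos
  have hne : Set.Nonempty {L | ∃ T γ a, G.IsSubunitIn Ω T γ a ∧ γ 0 = x₀ ∧ γ T = x ∧
      L = ∫ t in (0:ℝ)..T, ‖a t‖} := by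
    obtain ⟨T, γ, a, hT, hmem, hcont, hmeas, hb, hid, h0, hTx⟩ := G.chow Ω hΩo hΩc x₀ hx₀ x hx
    exact ⟨_, T, γ, a, ⟨⟨hT, hmem, hcont, hmeas, ⟨1, hb⟩, hid⟩, hb⟩, h0, hTx, rfl⟩
  refine le_of_forall_pos_le_add fun η hη => ?_
  obtain ⟨L, hLmem, hLlt⟩ := Real.lt_sInf_add_pos hne (show (0:ℝ) < η / α by positivity)
  obtain ⟨T, γ, a, hsub, h0, hTx, rfl⟩ := hLmem
  obtain ⟨⟨hT, hmem, hcont, hmeas, -, hid⟩, hae⟩ := hsub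
  have h1 : G.optDist univ K x₀ x ≤ ∫ t in (0:ℝ)..T, sigmaStar K (γ t) (a t) :=
    csInf_le (G.optDist_bddBelow hK univ x₀ x)
      ⟨T, γ, a, ⟨hT, fun t _ => mem_univ _, hcont, hmeas, ⟨1, hae⟩, hid⟩, h0, hTx, rfl⟩
  have h2 := integral_sigmaStar_le hK hT hcont hmeas hae
  have h3 : (∫ t in (0:ℝ)..T, ‖a t‖) < G.ccDist Ω x₀ x + η / α := hLlt
  calc G.optDist univ K x₀ x ≤ α * ∫ t in (0:ℝ)..T, ‖a t‖ := le_trans h1 h2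
    _ ≤ α * (G.ccDist Ω x₀ x + η / α) := by nlinarith
    _ = α * G.ccDist Ω x₀ x + η := by field_simp

lemma integral_norm_le_total {T t : ℝ} (ht : 0 ≤ t) (htT : t ≤ T) {a : ℝ → Euc m}
    (hIa : IntervalIntegrable (fun s => ‖a s‖) volume 0 T) :
    ∫ s in (0:ℝ)..t, ‖a s‖ ≤ ∫ s in (0:ℝ)..T, ‖a s‖ := by
  have h0T : (0:ℝ) ≤ T := ht.trans htT
  have hmem : t ∈ uIcc (0:ℝ) T := by
    rw [uIcc_of_le h0T]
    exact ⟨ht, htT⟩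
  have hmem0 : (0:ℝ) ∈ uIcc (0:ℝ) T := left_mem_uIcc
  have hmemT : T ∈ uIcc (0:ℝ) T := right_mem_uIcc
  have h1 : IntervalIntegrable (fun s => ‖a s‖) volume 0 t :=
    hIa.mono_set (uIcc_subset_uIcc hmem0 hmem)
  have h2 : IntervalIntegrable (fun s => ‖a s‖) volume t T :=
    hIa.mono_set (uIcc_subset_uIcc hmem hmemT)
  have hadd := intervalIntegral.integral_add_adjacent_intervals h1 h2
  have h3 : 0 ≤ ∫ s in t..T, ‖a s‖ :=
    intervalIntegral.integral_nonneg htT fun u _ => norm_nonneg _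
  linarith [hadd]

end DistAux
end CarnotGroup
set_option maxHeartbeats 2000000 in
/-- **Lemma (Localization of almost-optimal curves).** Let `Ω ⊆ 𝔾` be a domain, `H` satisfy
(H) and `K ∈ 𝒦(H,Ω)`. For any `x₀ ∈ Ω` and any `R > 0` such that `B_R(x₀, d_Ω) ⊆ Ω`, there
exist `r > 0` and `ε̄ > 0` such that for any `x ∈ B_r(x₀, d_Ω)` and `0 < ε < ε̄`, every
sub-unit curve `γ : [0,T] → ℝ^n` from `x₀` to `x` with
`d_{σ*_K}(x₀,x) ≥ ∫₀^T σ*_K(γ(t), γ'(t)) dt − ε` lies in `B_R(x₀, d_Ω)`. -/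
theorem almost_optimal_curves_localize {n m k : ℕ} (G : CarnotGroup n m k)
    (Ω : Set (Euc n)) (hΩo : IsOpen Ω) (hΩc : IsConnected Ω)
    (H : Euc n → Euc m → ℝ) (α : ℝ) (hH : SatisfiesH Ω H α)
    (K : Euc n → Euc m → ℝ) (hK : ExtendsH Ω H K) :
    ∀ x₀ ∈ Ω, ∀ R : ℝ, 0 < R →
      (∀ y ∈ Ω, G.ccDist Ω x₀ y < R → y ∈ Ω) →
      ∃ r > (0:ℝ), ∃ εbar > (0:ℝ), ∀ x ∈ Ω, G.ccDist Ω x₀ x < r →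
        ∀ ε : ℝ, 0 < ε → ε < εbar →
        ∀ (T : ℝ) (γ : ℝ → Euc n) (a : ℝ → Euc m),
          G.IsSubunitIn univ T γ a → γ 0 = x₀ → γ T = x →
          (∫ t in (0:ℝ)..T, sigmaStar K (γ t) (a t)) - ε ≤ G.optDist univ K x₀ x →
          ∀ t ∈ Icc (0:ℝ) T, γ t ∈ Ω ∧ G.ccDist Ω x₀ (γ t) < R := by
  obtain ⟨⟨α', hK'⟩, -⟩ := hK
  intro x₀ hx₀ R hR _
  have hα := hK'.alpha_pos
  -- a Euclidean closed ball around x₀ inside Ω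
  obtain ⟨ρ₀, hρ₀, hball₀⟩ := Metric.isOpen_iff.1 hΩo x₀ hx₀
  set ρ := ρ₀ / 2 with hρdef
  have hρ : 0 < ρ := by positivity
  have hball : Metric.closedBall x₀ ρ ⊆ Ω :=
    (Metric.closedBall_subset_ball (by rw [hρdef]; linarith)).trans hball₀
  -- a bound for the vector fields on that ball
  have hΦc : ContinuousOn (fun y : Euc n => ∑ i, ‖G.X i y‖) (Metric.closedBall x₀ ρ) :=
    (continuous_finset_sum _ fun i _ => (G.smooth_X i).continuous.norm).continuousOn
  obtain ⟨M, hM0, hM⟩ : ∃ M : ℝ, 0 ≤ M ∧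
      ∀ y ∈ Metric.closedBall x₀ ρ, (∑ i, ‖G.X i y‖) ≤ M := by
    obtain ⟨ymax, -, hymax⟩ :=
      (isCompact_closedBall x₀ ρ).exists_isMaxOn ⟨x₀, Metric.mem_closedBall_self hρ.le⟩ hΦc
    refine ⟨∑ i, ‖G.X i ymax‖, Finset.sum_nonneg fun i _ => norm_nonneg _, fun y hy => hymax hy⟩
  -- the localization radius
  obtain ⟨c, hc, hcR, hcρ⟩ : ∃ c : ℝ, 0 < c ∧ c ≤ R ∧ c * (M + 1) ≤ ρ :=
    ⟨min R (ρ / (M + 1)), lt_min hR (by positivity), min_le_left _ _,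
      (le_div_iff₀ (by positivity : (0:ℝ) < M + 1)).1 (min_le_right _ _)⟩
  refine ⟨c / (4 * α' ^ 2), by positivity, c / (4 * α'), by positivity, ?_⟩
  intro x hx hxr ε hε hεb T γ a hsub h0γ hTγ hopt
  obtain ⟨⟨hT, hmemu, hγc, hameas, ⟨C, hC⟩, hid⟩, ha1⟩ := hsub
  have hIa : IntervalIntegrable (fun t => ‖a t‖) volume 0 T :=
    intervalIntegrable_of_bounded hT hameas.norm
      (ha1.mono fun t ht => by simpa [abs_of_nonneg (norm_nonneg (a t))] using ht)
  set L : ℝ := ∫ t in (0:ℝ)..T, ‖a t‖ with hLdef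
  have hL0 : 0 ≤ L := intervalIntegral.integral_nonneg hT.le fun u _ => norm_nonneg _
  have hIg : IntervalIntegrable (fun t => sigmaStar K (γ t) (a t)) volume 0 T := by
    apply intervalIntegrable_of_bounded hT (aesm_sigmaStar hK' hγc hameas)
    filter_upwards [ha1] with t ht
    rw [Real.norm_eq_abs, abs_of_nonneg (sigmaStar_nonneg hK' _ _)]
    calc sigmaStar K (γ t) (a t) ≤ α' * ‖a t‖ := sigmaStar_le hK' _ _
      _ ≤ α' * 1 := by nlinarith
  -- lower bound for the optical length of γ
  have hlow : (1 / α') * L ≤ ∫ t in (0:ℝ)..T, sigmaStar K (γ t) (a t) := by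
    have hmono := intervalIntegral.integral_mono_on hT.le (hIa.const_mul (1 / α')) hIg
      (fun t _ => le_sigmaStar hK' (γ t) (a t))
    calc (1 / α') * L = ∫ t in (0:ℝ)..T, (1 / α') * ‖a t‖ :=
        (intervalIntegral.integral_const_mul _ _).symm
      _ ≤ _ := hmono
  -- upper bound for the optical distance
  have hup : G.optDist univ K x₀ x ≤ α' * G.ccDist Ω x₀ x :=
    G.optDist_le_alpha_ccDist hΩo hΩc.isPreconnected hK' hx₀ hx
  have hccnn := G.ccDist_nonneg Ω x₀ x
  -- the total sub-Riemannian length of γ is at most c/2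
  have hLc : L ≤ c / 2 := by
    have e1 : (1 / α') * L ≤ α' * G.ccDist Ω x₀ x + ε := by linarith
    have e2 : α' * G.ccDist Ω x₀ x < α' * (c / (4 * α' ^ 2)) :=
      mul_lt_mul_of_pos_left hxr hα
    have e3 : α' * (c / (4 * α' ^ 2)) = c / (4 * α') := by
      field_simp
    have e4 : (1 / α') * L < c / (2 * α') := by
      rw [e3] at e2
      have : c / (4 * α') + c / (4 * α') = c / (2 * α') := by ring
      linarith [hcR]
    have e5 := mul_le_mul_of_nonneg_left e4.le hα.le
    have e6 : α' * ((1 / α') * L) = L := by field_simp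
    have e7 : α' * (c / (2 * α')) = c / 2 := by field_simp
    rw [e6, e7] at e5
    exact e5
  -- γ never leaves the Euclidean ball
  have hstay : ∀ s ∈ Icc (0:ℝ) T, γ s ∈ Metric.closedBall x₀ ρ := by
    by_contra hcon
    push_neg at hcon
    obtain ⟨s₀, hs₀, hs₀out⟩ := hcon
    set Sbad : Set ℝ := Icc (0:ℝ) T ∩ (fun s => dist (γ s) x₀) ⁻¹' Ici ρ with hSdef
    have hSne : Sbad.Nonempty := by
      refine ⟨s₀, hs₀, ?_⟩
      simp only [mem_preimage, mem_Ici]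
      exact le_of_lt (not_le.1 fun hle => hs₀out (Metric.mem_closedBall.2 hle))
    have hScl : IsClosed Sbad :=
      ((Continuous.dist continuous_id continuous_const).comp_continuousOn hγc).preimage_isClosed_of_isClosed isClosed_Icc isClosed_Ici
    have hSbdd : BddBelow Sbad := ⟨0, fun s hs => hs.1.1⟩
    set t₀ : ℝ := sInf Sbad with ht₀def
    have ht₀mem : t₀ ∈ Sbad := hScl.csInf_mem hSne hSbdd
    have ht₀Icc : t₀ ∈ Icc (0:ℝ) T := ht₀mem.1
    have ht₀dist : ρ ≤ dist (γ t₀) x₀ := ht₀mem.2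
    have ht₀pos : 0 < t₀ := by
      rcases lt_or_eq_of_le ht₀Icc.1 with h | h
      · exact h
      · exfalso
        rw [← h, h0γ] at ht₀dist
        simp at ht₀dist
        linarith [hcR]
    have hbefore : ∀ s, 0 ≤ s → s < t₀ → γ s ∈ Metric.closedBall x₀ ρ := by
      intro s hs0 hst
      by_contra hout
      have hmem : s ∈ Sbad := by
        refine ⟨⟨hs0, hst.le.trans ht₀Icc.2⟩, ?_⟩
        simp only [mem_preimage, mem_Ici]
        exact le_of_lt (not_le.1 fun hle => hout (Metric.mem_closedBall.2 hle))
      exact absurd (csInf_le hSbdd hmem) (not_le.2 hst)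
    set f : ℝ → Euc n := fun s => ∑ i, a s i • G.X i (γ s) with hfdef
    have hIccsub : Icc (0:ℝ) t₀ ⊆ Icc (0:ℝ) T := Icc_subset_Icc le_rfl ht₀Icc.2
    have hne : ∀ᵐ s ∂(volume.restrict (Icc (0:ℝ) t₀)), s ≠ t₀ := by
      apply ae_restrict_of_ae
      rw [ae_iff]
      simpa using measure_singleton t₀
    have ha1t₀ : ∀ᵐ s ∂(volume.restrict (Icc (0:ℝ) t₀)), ‖a s‖ ≤ 1 :=
      ae_restrict_of_ae_restrict_of_subset hIccsub ha1
    have hfb : ∀ᵐ s ∂(volume.restrict (Icc (0:ℝ) t₀)), ‖f s‖ ≤ M * ‖a s‖ := by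
      filter_upwards [hne, ae_restrict_mem measurableSet_Icc] with s hs hsmem
      have hsball : γ s ∈ Metric.closedBall x₀ ρ :=
        hbefore s hsmem.1 (lt_of_le_of_ne hsmem.2 hs)
      calc ‖f s‖ ≤ ∑ i, ‖a s i • G.X i (γ s)‖ := norm_sum_le _ _
        _ = ∑ i, |a s i| * ‖G.X i (γ s)‖ := by
            simp [norm_smul, Real.norm_eq_abs]
        _ ≤ ∑ i, ‖a s‖ * ‖G.X i (γ s)‖ := Finset.sum_le_sum fun i _ =>
            mul_le_mul_of_nonneg_right (abs_coord_le_norm _ i) (norm_nonneg _)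
        _ = ‖a s‖ * ∑ i, ‖G.X i (γ s)‖ := by rw [Finset.mul_sum]
        _ ≤ ‖a s‖ * M := mul_le_mul_of_nonneg_left (hM _ hsball) (norm_nonneg _)
        _ = M * ‖a s‖ := mul_comm _ _
    have hfmeas : AEStronglyMeasurable f (volume.restrict (Icc (0:ℝ) t₀)) :=
      (aesm_sum_smul G hγc hameas).mono_measure (Measure.restrict_mono hIccsub le_rfl)
    have hanorm : AEStronglyMeasurable (fun s => ‖a s‖) (volume.restrict (Icc (0:ℝ) t₀)) :=
      (hameas.norm).mono_measure (Measure.restrict_mono hIccsub le_rfl)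
    have hIf : IntervalIntegrable (fun s => ‖f s‖) volume 0 t₀ := by
      apply intervalIntegrable_of_bounded (C := M) ht₀pos hfmeas.norm
      filter_upwards [hfb, ha1t₀] with s h1 h2
      rw [Real.norm_eq_abs, abs_of_nonneg (norm_nonneg _)]
      nlinarith [norm_nonneg (a s)]
    have hIa' : IntervalIntegrable (fun s => ‖a s‖) volume 0 t₀ :=
      intervalIntegrable_of_bounded ht₀pos hanorm
        (ha1t₀.mono fun s hs => by simpa [abs_of_nonneg (norm_nonneg (a s))] using hs)
    have hIMa : IntervalIntegrable (fun s => M * ‖a s‖) volume 0 t₀ := hIa'.const_mul M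
    have key : ρ ≤ M * ∫ s in (0:ℝ)..t₀, ‖a s‖ := by
      have h1 : dist (γ t₀) x₀ = ‖∫ s in (0:ℝ)..t₀, f s‖ := by
        rw [hid t₀ ht₀Icc, h0γ, dist_eq_norm]
        simp
      have h2 : ‖∫ s in (0:ℝ)..t₀, f s‖ ≤ ∫ s in (0:ℝ)..t₀, ‖f s‖ :=
        intervalIntegral.norm_integral_le_integral_norm ht₀pos.le
      have h3 : (∫ s in (0:ℝ)..t₀, ‖f s‖) ≤ ∫ s in (0:ℝ)..t₀, M * ‖a s‖ :=
        intervalIntegral.integral_mono_ae_restrict ht₀pos.le hIf hIMa hfb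
      have h4 : (∫ s in (0:ℝ)..t₀, M * ‖a s‖) = M * ∫ s in (0:ℝ)..t₀, ‖a s‖ :=
        intervalIntegral.integral_const_mul _ _
      linarith [ht₀dist]
    have h5 : (∫ s in (0:ℝ)..t₀, ‖a s‖) ≤ L := CarnotGroup.integral_norm_le_total ht₀pos.le ht₀Icc.2 hIa
    have h7 : 0 ≤ ∫ s in (0:ℝ)..t₀, ‖a s‖ :=
      intervalIntegral.integral_nonneg ht₀pos.le fun u _ => norm_nonneg _
    nlinarith [mul_le_mul_of_nonneg_left h5 hM0, mul_le_mul_of_nonneg_left hLc hM0, hcρ, hρ, hc, key]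
  -- conclusion
  intro t htIcc
  have hball_t : γ t ∈ Ω := hball (hstay t htIcc)
  refine ⟨hball_t, ?_⟩
  rcases eq_or_lt_of_le htIcc.1 with h | htpos
  · rw [← h, h0γ]
    exact lt_of_le_of_lt (G.ccDist_self_nonpos hx₀) hR
  · have hsubIcc : Icc (0:ℝ) t ⊆ Icc (0:ℝ) T := Icc_subset_Icc le_rfl htIcc.2
    have hsubt : G.IsSubunitIn Ω t γ a := by
      refine ⟨⟨htpos, fun s hs => hball (hstay s (hsubIcc hs)), hγc.mono hsubIcc,
        hameas.mono_measure (Measure.restrict_mono hsubIcc le_rfl),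
        ⟨C, ae_restrict_of_ae_restrict_of_subset hsubIcc hC⟩,
        fun s hs => hid s (hsubIcc hs)⟩,
        ae_restrict_of_ae_restrict_of_subset hsubIcc ha1⟩
    have hcc := G.ccDist_le_of_curve hsubt h0γ rfl
    have h7 := CarnotGroup.integral_norm_le_total htpos.le htIcc.2 hIa
    linarith [hcR]
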